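/- Let W_aff be the affine Weyl group of an irreducible root system acting on X_R by the p-dilated dot action (p ≥ h). For x ∈ W_aff and w ∈ W_fin, the set of reflections t ∈ R_L(wx) with t ∉ W_fin equals w (R_L(x) \ R(W_fin)) w⁻¹, where R_L(y) is the set of reflections t with ty < y and R(W_fin) is the set of reflections lying in W_fin. -/

import Mathlib

open scoped RealInnerProductSpace Pointwise Classical

/-- The Bruhat order on a Coxeter group: `u < w` iff there is a chain
`u = u₀, u₁, …, u_k = w` (`k ≥ 1`) where each `u_{j+1} = t_j * u_j` for a reflection `t_j`
and the lengths strictly increase along the chain. -/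
def CoxeterSystem.bruhatLT {B W : Type*} [Group W] {M : CoxeterMatrix B}
    (cs : CoxeterSystem M W) (u w : W) : Prop :=
  Relation.TransGen
    (fun a b : W => (∃ t : W, cs.IsReflection t ∧ b = t * a) ∧ cs.length a < cs.length b) u w

noncomputable section AffineWeyl

variable {V : Type*} [NormedAddCommGroup V] [InnerProductSpace ℝ V] [FiniteDimensional ℝ V]

/-- A (reduced, crystallographic, irreducible) root system in a finite-dimensional real
inner product space `V`. -/
structure RootSystemIn (V : Type*) [NormedAddCommGroup V] [InnerProductSpace ℝ V] : Type _ where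
  /-- the set of roots -/
  roots : Set V
  finite : roots.Finite
  nonempty : roots.Nonempty
  ne_zero : ∀ α ∈ roots, α ≠ 0
  span_top : Submodule.span ℝ roots = ⊤
  /-- the root system is reduced -/
  reduced : ∀ α ∈ roots, ∀ t : ℝ, t • α ∈ roots → t = 1 ∨ t = -1
  /-- roots are permuted by the reflection in (the hyperplane orthogonal to) each root -/
  reflect_mem : ∀ α ∈ roots, ∀ β ∈ roots, β - (2 * ⟪β, α⟫ / ⟪α, α⟫) • α ∈ roots
  /-- the root system is crystallographic: `⟨β, α^∨⟩ ∈ ℤ` -/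
  crystal : ∀ α ∈ roots, ∀ β ∈ roots, ∃ k : ℤ, 2 * ⟪β, α⟫ / ⟪α, α⟫ = (k : ℝ)
  /-- the root system is irreducible -/
  irred : ∀ A B : Set V, A ∪ B = roots → Disjoint A B →
    (∀ a ∈ A, ∀ b ∈ B, ⟪a, b⟫ = 0) → A = ∅ ∨ B = ∅

/-- `Pos` is a positive system for the root system `R`: the roots on which some linear
functional (nonvanishing on all roots) is positive. -/
def IsPositiveSystem (R : RootSystemIn V) (Pos : Set V) : Prop :=
  ∃ f : V →ₗ[ℝ] ℝ, (∀ α ∈ R.roots, f α ≠ 0) ∧ Pos = {α | α ∈ R.roots ∧ 0 < f α}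

/-- The (finite) reflection `s_α`, as an affine transformation of `V`. -/
def sfin (α : V) : V ≃ᵃ[ℝ] V :=
  ((Submodule.reflection (ℝ ∙ α)ᗮ).toLinearEquiv).toAffineEquiv

/-- The affine reflection `s_{α,m} = t_{mα} ∘ s_α`. -/
def saff (α : V) (m : ℤ) : V ≃ᵃ[ℝ] V :=
  AffineEquiv.constVAdd ℝ V ((m : ℝ) • α) * sfin α

/-- The finite Weyl group `W_fin`, generated by the reflections `s_α`, `α ∈ Φ`. -/
def Wfin (R : RootSystemIn V) : Subgroup (V ≃ᵃ[ℝ] V) :=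
  Subgroup.closure {g | ∃ α ∈ R.roots, g = sfin α}

/-- The affine Weyl group `W_aff = ℤΦ ⋊ W_fin`, generated by the reflections `s_α` and the
translations by elements of the root lattice `ℤΦ`. -/
def Waff (R : RootSystemIn V) : Subgroup (V ≃ᵃ[ℝ] V) :=
  Subgroup.closure ({g | ∃ α ∈ R.roots, g = sfin α} ∪
    {g | ∃ γ ∈ AddSubgroup.closure R.roots, g = AffineEquiv.constVAdd ℝ V γ})

/-- The base (set of simple roots) of a positive system: the indecomposable positive roots. -/
def baseOf (Pos : Set V) : Set V :=
  {α | α ∈ Pos ∧ ¬∃ β ∈ Pos, ∃ γ ∈ Pos, α = β + γ}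

/-- `αh` is the highest short root: it is a positive root of minimal length, and it dominates
every other root of the same length. -/
def IsHighestShortRoot (R : RootSystemIn V) (Pos : Set V) (αh : V) : Prop :=
  αh ∈ Pos ∧ (∀ β ∈ R.roots, ⟪αh, αh⟫ ≤ ⟪β, β⟫) ∧
    ∀ β ∈ Pos, ⟪β, β⟫ = ⟪αh, αh⟫ → αh - β ∈ AddSubmonoid.closure (baseOf Pos)

/-- The Coxeter system `cs` on `W_aff` is the standard one: its simple reflections are the
`s_α`, `α ∈ Δ`, together with `s_{αh,1}`; its reflections are the `s_{α,m}`, `α ∈ Φ⁺`, `m ∈ ℤ`. -/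
def IsAffineCoxeterStructure (R : RootSystemIn V) {B : Type*} {M : CoxeterMatrix B}
    (cs : CoxeterSystem M (Waff R)) (Pos : Set V) (αh : V) : Prop :=
  ({g : ↥(Waff R) | ∃ i, g = cs.simple i} =
      {g : ↥(Waff R) | ∃ α ∈ baseOf Pos, (g : V ≃ᵃ[ℝ] V) = sfin α} ∪
        {g : ↥(Waff R) | (g : V ≃ᵃ[ℝ] V) = saff αh 1}) ∧
    ∀ t : ↥(Waff R), cs.IsReflection t ↔ ∃ α ∈ Pos, ∃ m : ℤ, (t : V ≃ᵃ[ℝ] V) = saff α m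

/-- The set `W_aff⁺` of elements of minimal length in their coset `W_fin x`. -/
def WaffPlus (R : RootSystemIn V) {B : Type*} {M : CoxeterMatrix B}
    (cs : CoxeterSystem M (Waff R)) : Set ↥(Waff R) :=
  {x | ∀ w : ↥(Waff R), (w : V ≃ᵃ[ℝ] V) ∈ Wfin R → cs.length x ≤ cs.length (w * x)}

/-- Half sum of positive roots. -/
def rhoOf (Pos : Set V) : V := (2⁻¹ : ℝ) • ∑ᶠ α ∈ Pos, α

/-- The `p`-dilated dot action of an affine transformation `g = t_γ w` on `V`:
`g · x = w(x+ρ) + pγ - ρ`. -/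
def dotAct (p : ℕ) (ρ : V) (g : V ≃ᵃ[ℝ] V) (x : V) : V :=
  (p : ℝ) • g ((p : ℝ)⁻¹ • (x + ρ)) - ρ

/-- The fundamental alcove `C_fund = { x : 0 < ⟨x+ρ, α^∨⟩ < p for all α ∈ Φ⁺ }`. -/
def Cfund (p : ℕ) (Pos : Set V) (ρ : V) : Set V :=
  {v | ∀ α ∈ Pos, 0 < 2 * ⟪v + ρ, α⟫ / ⟪α, α⟫ ∧ 2 * ⟪v + ρ, α⟫ / ⟪α, α⟫ < p}

/-- `H` separates `A` and `B`: they lie in different connected components of `Hᶜ`. -/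
def Separates (H A B : Set V) : Prop :=
  A ⊆ Hᶜ ∧ B ⊆ Hᶜ ∧ ∀ a ∈ A, ∀ b ∈ B,
    connectedComponentIn Hᶜ a ≠ connectedComponentIn Hᶜ b

/-- The sign `det(w) = ±1` of an affine transformation (the sign of the determinant of its
linear part), as an integer. -/
def sgnW (g : V ≃ᵃ[ℝ] V) : ℤ :=
  if LinearMap.det (g.linear : V →ₗ[ℝ] V) < 0 then -1 else 1

/-- For a reflection `t = s_{α,m}` with `α ∈ Φ⁺`, `mval t = m`. -/
def mval (Pos : Set V) (t : V ≃ᵃ[ℝ] V) : ℤ :=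
  if h : ∃ am : V × ℤ, am.1 ∈ Pos ∧ t = saff am.1 am.2 then h.choose.2 else 0

/-- Defining relations of the anti-spherical module `sign ⊗_{ℤ[W_fin]} ℤ[W_aff]`. -/
def relSet (R : RootSystemIn V) : Set (↥(Waff R) →₀ ℤ) :=
  {f | ∃ w x : ↥(Waff R), (w : V ≃ᵃ[ℝ] V) ∈ Wfin R ∧
    f = Finsupp.single (w * x) 1 - sgnW (w : V ≃ᵃ[ℝ] V) • Finsupp.single x 1}

/-- The anti-spherical module `M_asph = sign ⊗_{ℤ[W_fin]} ℤ[W_aff]`, presented as the quotient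
of the free `ℤ`-module on `W_aff` by the relations `(w x) - det(w)·x` for `w ∈ W_fin`. -/
abbrev Masph (R : RootSystemIn V) :=
  (↥(Waff R) →₀ ℤ) ⧸ Submodule.span ℤ (relSet R)

/-- The standard element `N_x ∈ M_asph`. -/
def NN (R : RootSystemIn V) (x : ↥(Waff R)) : Masph R :=
  Submodule.Quotient.mk (Finsupp.single x 1)

/-- Right multiplication by `y ∈ W_aff` on the anti-spherical module: `N_x · y = N_{xy}`. -/
def rmul (R : RootSystemIn V) (y : ↥(Waff R)) : Masph R →ₗ[ℤ] Masph R :=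
  Submodule.mapQ _ _ (Finsupp.lmapDomain ℤ ℤ (fun x => x * y))
    (by
      rw [Submodule.span_le]
      rintro f ⟨w, x, hw, rfl⟩
      simp only [SetLike.mem_coe, Submodule.mem_comap, map_sub, map_zsmul,
        Finsupp.lmapDomain_apply, Finsupp.mapDomain_single]
      exact Submodule.subset_span ⟨w, x * y, hw, by rw [mul_assoc]⟩)

/-- The Jantzen sum formula element
`JSF_x = Σ_{t ∈ R_L(x)} ν_p(m(t)·p) · N_{tx} ∈ M_asph`. -/
def JSF (R : RootSystemIn V) (Pos : Set V) (p : ℕ) {B : Type*} {M : CoxeterMatrix B}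
    (cs : CoxeterSystem M (Waff R)) (x : ↥(Waff R)) : Masph R :=
  ∑ᶠ t ∈ {t : ↥(Waff R) | cs.IsReflection t ∧ cs.bruhatLT (t * x) x},
    (padicValInt p (mval Pos (t : V ≃ᵃ[ℝ] V) * p) : ℤ) • NN R (t * x)

end AffineWeyl

/-!
For a reflection `t`, `t * y < y` in the Bruhat order just says `ℓ (t * y) < ℓ y`, i.e. `t` is a
left inversion of `y`. Left inversions are read off Tits' reflection cocycle: letting each simple
reflection `s` act on `W × {±1}` by `(t, ε) ↦ (s t s, ±ε)`, with the sign flipped exactly at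
`t = s`, defines an action of `W`, and the sign it attaches to `(w, t)` is `-1` exactly when `t`
is a left inversion of `w`. The cocycle identity shows that for `t ≠ s`, `t` is a left inversion
of `s y` iff `s t s` is one of `y`. If `s ∈ W_fin`, no reflection outside `W_fin` equals `s`, so
conjugation by `s` carries the left inversions of `y` outside `W_fin` onto those of `s y`; this
passes to the subgroup generated by the simple reflections lying in `W_fin`. That subgroup is all
of `W_fin`: a non-simple positive root `α` has a simple root `β` with `⟪α, β⟫ > 0`, `s_β α` is a
smaller positive root, and `s_α = s_β s_{s_β α} s_β`.
-/

section FlipConj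

variable {G : Type*} [Group G]

theorem mul_mul_inv_eq_iff {g t u : G} : g * t * g⁻¹ = u ↔ t = g⁻¹ * u * g := by
  constructor <;> rintro rfl <;> group

noncomputable def flipConj (a : G) (ha : a * a = 1) : Equiv.Perm (G × ℤˣ) :=
  Function.Involutive.toPerm (fun p => (a * p.1 * a⁻¹, (if p.1 = a then -1 else 1) * p.2))
    fun p => by
      have ha' : a⁻¹ = a := inv_eq_of_mul_eq_one_right ha
      ext
      · simp only [ha', ← mul_assoc, ha, one_mul, mul_assoc _ a a, mul_one]
      · simp only [mul_mul_inv_eq_iff, inv_mul_cancel, one_mul]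
        split_ifs <;> simp

theorem flipConj_apply (a : G) (ha : a * a = 1) (t : G) (ε : ℤˣ) :
    flipConj a ha (t, ε) = (a * t * a⁻¹, (if t = a then -1 else 1) * ε) := rfl

theorem flipConj_mul_flipConj_pow {a b : G} (ha : a * a = 1) (hb : b * b = 1) (k : ℕ)
    (t : G) (ε : ℤˣ) :
    ((flipConj a ha * flipConj b hb) ^ k) (t, ε) =
      ((a * b) ^ k * t * ((a * b) ^ k)⁻¹,
        (∏ l ∈ Finset.range (2 * k), if t = b * (a * b) ^ l then -1 else 1) * ε) := by
  have ha' : a⁻¹ = a := inv_eq_of_mul_eq_one_right ha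
  have hb' : b⁻¹ = b := inv_eq_of_mul_eq_one_right hb
  -- conjugation by `b` inverts `a * b`
  have hconj (n : ℕ) : ((a * b) ^ n)⁻¹ * b = b * (a * b) ^ n := by
    have : b * (a * b) ^ n * b⁻¹ = ((a * b) ^ n)⁻¹ := by
      rw [← conj_pow, ← inv_pow, mul_inv_rev, ha', hb']
      simp only [mul_assoc, hb, mul_one]
    rw [← this, hb', mul_assoc, hb, mul_one]
  induction k with
  | zero => simp
  | succ k ih =>
    rw [pow_succ', Equiv.Perm.mul_apply, Equiv.Perm.mul_apply, ih, flipConj_apply, flipConj_apply]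
    have h₁ : ((a * b) ^ k)⁻¹ * b * (a * b) ^ k = b * (a * b) ^ (2 * k) := by
      rw [hconj, mul_assoc, ← pow_add, two_mul]
    have h₂ : ((a * b) ^ k)⁻¹ * (b⁻¹ * a * b) * (a * b) ^ k = b * (a * b) ^ (2 * k + 1) := by
      rw [hb', show 2 * k + 1 = k + 1 + k by ring, pow_add, pow_succ]
      simp only [← mul_assoc, hconj]
    refine Prod.ext ?_ ?_
    · simp only [pow_succ', mul_inv_rev, mul_assoc]
    · simp only [mul_mul_inv_eq_iff, h₁, h₂, Nat.mul_succ, Finset.prod_range_succ]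
      ac_rfl

theorem prod_range_two_mul_of_periodic (m : ℕ) (g : ℕ → ℤˣ) (hg : ∀ l, g (m + l) = g l) :
    ∏ l ∈ Finset.range (2 * m), g l = 1 := by
  rw [two_mul, Finset.prod_range_add]
  simp only [hg, Int.units_mul_self]

end FlipConj

namespace CoxeterSystem

variable {B W : Type*} [Group W] {M : CoxeterMatrix B} (cs : CoxeterSystem M W)

local prefix:100 "s" => cs.simple
local prefix:100 "ℓ" => cs.length

theorem isLiftable_flipConj :
    M.IsLiftable fun i => flipConj (s i) (cs.simple_mul_simple_self i) := by
  intro i j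
  ext ⟨t, ε⟩ : 1
  rw [flipConj_mul_flipConj_pow, cs.simple_mul_simple_pow, prod_range_two_mul_of_periodic]
  · simp
  · intro l
    rw [pow_add, cs.simple_mul_simple_pow, one_mul]

noncomputable def reflCocycle : W →* Equiv.Perm (W × ℤˣ) :=
  cs.lift ⟨_, cs.isLiftable_flipConj⟩

theorem reflCocycle_simple (i : B) :
    cs.reflCocycle (s i) = flipConj (s i) (cs.simple_mul_simple_self i) :=
  cs.lift_apply_simple cs.isLiftable_flipConj i

theorem reflCocycle_apply (w t : W) (ε : ℤˣ) :
    cs.reflCocycle w (t, ε) = (w * t * w⁻¹, (cs.reflCocycle w (t, 1)).2 * ε) := by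
  induction w using cs.simple_induction generalizing t ε with
  | simple i => simp [reflCocycle_simple, flipConj_apply]
  | one => simp
  | mul u v hu hv =>
    rw [map_mul, Equiv.Perm.mul_apply, Equiv.Perm.mul_apply, hv, hv t 1, hu, hu _ (_ * 1)]
    simp only [mul_one, mul_inv_rev, mul_assoc]

noncomputable def inversionSign (w t : W) : ℤˣ := (cs.reflCocycle w⁻¹ (t, 1)).2

theorem inversionSign_one (t : W) : cs.inversionSign 1 t = 1 := by
  simp [inversionSign]

theorem inversionSign_simple (i : B) (t : W) :
    cs.inversionSign (s i) t = if t = s i then -1 else 1 := by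
  simp [inversionSign, reflCocycle_simple, flipConj_apply]

theorem inversionSign_mul (u v t : W) :
    cs.inversionSign (u * v) t = cs.inversionSign u t * cs.inversionSign v (u⁻¹ * t * u) := by
  rw [inversionSign, mul_inv_rev, map_mul, Equiv.Perm.mul_apply, reflCocycle_apply cs u⁻¹,
    reflCocycle_apply cs v⁻¹, inv_inv, mul_one, mul_comm]
  rfl

theorem inversionSign_self {t : W} (ht : cs.IsReflection t) : cs.inversionSign t t = -1 := by
  obtain ⟨u, i, rfl⟩ := ht
  have hconj : u⁻¹ * (u * s i * u⁻¹) * u = s i := by group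
  have h₁ := cs.inversionSign_mul u (s i * u⁻¹) (u * s i * u⁻¹)
  have h₂ := cs.inversionSign_mul (s i) u⁻¹ (s i)
  have h₃ := cs.inversionSign_mul u u⁻¹ (u * s i * u⁻¹)
  rw [hconj, ← mul_assoc] at h₁
  rw [hconj, mul_inv_cancel, inversionSign_one] at h₃
  rw [cs.inv_simple, cs.simple_mul_simple_self, one_mul, inversionSign_simple, if_pos rfl] at h₂
  rw [h₁, h₂, neg_one_mul, mul_neg, ← h₃]

theorem length_mul_lt_of_inversionSign {w t : W} (ht : cs.IsReflection t)
    (h : cs.inversionSign w t = -1) : ℓ (t * w) < ℓ w := by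
  induction hn : ℓ w using Nat.strong_induction_on generalizing w t with
  | _ n ih =>
  have hw : w ≠ 1 := by
    rintro rfl
    simp [inversionSign_one] at h
  obtain ⟨i, hi⟩ := cs.exists_leftDescent_of_ne_one hw
  replace hi : ℓ (s i * w) < n := hn ▸ hi
  by_cases hti : t = s i
  · exact hti ▸ hn ▸ hi
  have hsign : cs.inversionSign (s i * w) (s i * t * s i) = -1 := by
    have := cs.inversionSign_mul (s i) (s i * w) t
    rwa [cs.simple_mul_simple_cancel_left, inversionSign_simple, if_neg hti, one_mul,
      cs.inv_simple, h, eq_comm] at this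
  have hrefl : cs.IsReflection (s i * t * s i) := by
    simpa only [cs.inv_simple] using ht.conj (s i)
  have hlt := ih _ hi hrefl hsign rfl
  calc ℓ (t * w) = ℓ (s i * (s i * t * s i * (s i * w))) := by
        simp only [mul_assoc, cs.simple_mul_simple_cancel_left]
    _ ≤ ℓ (s i) + ℓ (s i * t * s i * (s i * w)) := cs.length_mul_le _ _
    _ < n := by rw [cs.length_simple]; omega

theorem isLeftInversion_iff_inversionSign {w t : W} :
    cs.IsLeftInversion w t ↔ cs.IsReflection t ∧ cs.inversionSign w t = -1 := by
  refine ⟨fun ⟨ht, hlt⟩ => ⟨ht, ?_⟩, fun ⟨ht, h⟩ => ⟨ht, cs.length_mul_lt_of_inversionSign ht h⟩⟩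
  -- the sign at `t` flips from `t * w` to `w`, and `t` cannot shorten both of them
  have hflip := cs.inversionSign_mul t (t * w) t
  rw [← mul_assoc, ht.mul_self, one_mul, ht.inv, ht.mul_self, one_mul,
    cs.inversionSign_self ht] at hflip
  rcases Int.units_eq_one_or (cs.inversionSign (t * w) t) with h | h
  · rw [hflip, h, mul_one]
  · have := cs.length_mul_lt_of_inversionSign ht h
    rw [← mul_assoc, ht.mul_self, one_mul] at this
    omega

theorem isLeftInversion_simple_mul_iff {i : B} {w t : W} (hti : t ≠ s i) :
    cs.IsLeftInversion (s i * w) t ↔ cs.IsLeftInversion w (s i * t * s i) := by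
  have hsign := cs.inversionSign_mul (s i) w t
  rw [inversionSign_simple, if_neg hti, one_mul, cs.inv_simple] at hsign
  have hrefl := cs.isReflection_conj_iff (s i) t
  rw [cs.inv_simple] at hrefl
  rw [isLeftInversion_iff_inversionSign, isLeftInversion_iff_inversionSign, hsign, hrefl]

theorem isLeftInversion_mul_and_not_mem_iff {N : Subgroup W} {w : W}
    (hw : w ∈ Subgroup.closure (Set.range cs.simple ∩ N)) (y t : W) :
    cs.IsLeftInversion (w * y) t ∧ t ∉ N ↔
      cs.IsLeftInversion y (w⁻¹ * t * w) ∧ w⁻¹ * t * w ∉ N := by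
  induction hw using Subgroup.closure_induction generalizing y t with
  | mem g hg =>
    obtain ⟨⟨i, rfl⟩, hiN⟩ := hg
    have hconjN : (s i)⁻¹ * t * s i ∈ N ↔ t ∈ N := by
      rw [N.mul_mem_cancel_right hiN, N.mul_mem_cancel_left (inv_mem hiN)]
    rw [hconjN, cs.inv_simple]
    by_cases htN : t ∈ N
    · simp [htN]
    · have hti : t ≠ s i := fun h => htN (h ▸ hiN)
      rw [cs.isLeftInversion_simple_mul_iff hti]
  | one => simp
  | mul u v _ _ hu hv =>
    rw [mul_assoc, hu, hv]
    simp only [mul_inv_rev, mul_assoc]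
  | inv u _ hu =>
    simpa [mul_assoc] using (hu (u⁻¹ * y) (u * t * u⁻¹)).symm

theorem leftInversions_mul_of_mem_closure {N : Subgroup W} {w : W}
    (hw : w ∈ Subgroup.closure (Set.range cs.simple ∩ N)) (y : W) :
    {t | cs.IsLeftInversion (w * y) t ∧ t ∉ N} =
      (fun t => w * t * w⁻¹) '' {t | cs.IsLeftInversion y t ∧ t ∉ N} := by
  ext t
  refine ⟨fun h => ⟨w⁻¹ * t * w, (cs.isLeftInversion_mul_and_not_mem_iff hw y t).mp h, by group⟩,
    ?_⟩
  rintro ⟨u, hu, rfl⟩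
  exact (cs.isLeftInversion_mul_and_not_mem_iff hw y _).mpr (by simpa [mul_assoc] using hu)

theorem length_lt_of_bruhatLT {u w : W} (h : cs.bruhatLT u w) : ℓ u < ℓ w := by
  induction h with
  | single h => exact h.2
  | tail _ h ih => exact ih.trans h.2

theorem isReflection_and_bruhatLT_iff {w t : W} :
    cs.IsReflection t ∧ cs.bruhatLT (t * w) w ↔ cs.IsLeftInversion w t :=
  ⟨fun ⟨ht, h⟩ => ⟨ht, cs.length_lt_of_bruhatLT h⟩, fun ⟨ht, h⟩ =>
    ⟨ht, .single ⟨⟨t, ht, by rw [← mul_assoc, ht.mul_self, one_mul]⟩, h⟩⟩⟩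

end CoxeterSystem

section Reflections

variable {V : Type*} [NormedAddCommGroup V] [InnerProductSpace ℝ V]

theorem sfin_eq_reflection (β x : V) : sfin β x = Submodule.reflection (ℝ ∙ β)ᗮ x := rfl

theorem sfin_apply (β x : V) : sfin β x = x - (2 * ⟪x, β⟫ / ⟪β, β⟫) • β := by
  rw [sfin_eq_reflection, Submodule.reflection_orthogonal_apply,
    Submodule.reflection_singleton_apply, real_inner_comm, real_inner_self_eq_norm_sq, neg_sub,
    ← Nat.cast_smul_eq_nsmul ℝ, smul_smul, mul_div_assoc, Nat.cast_ofNat, RCLike.ofReal_real_eq_id,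
    id]

theorem sfin_sub (β x y : V) : sfin β (x - y) = sfin β x - sfin β y :=
  map_sub (Submodule.reflection (ℝ ∙ β)ᗮ) x y

theorem sfin_smul (β x : V) (c : ℝ) : sfin β (c • x) = c • sfin β x :=
  map_smul (Submodule.reflection (ℝ ∙ β)ᗮ) c x

theorem sfin_self (β : V) : sfin β β = -β :=
  Submodule.reflection_orthogonalComplement_singleton_eq_neg β

theorem sfin_sfin (β x : V) : sfin β (sfin β x) = x :=
  Submodule.reflection_reflection _ x

theorem inner_sfin_sfin (β x y : V) : ⟪sfin β x, sfin β y⟫ = ⟪x, y⟫ :=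
  (Submodule.reflection (ℝ ∙ β)ᗮ).inner_map_map x y

theorem sfin_mul_self (β : V) : sfin β * sfin β = 1 := by
  ext x
  exact sfin_sfin β x

theorem sfin_neg (β : V) : sfin (-β) = sfin β := by
  ext x
  simp only [sfin_apply, inner_neg_right, inner_neg_left, neg_neg, smul_neg, mul_neg, neg_div,
    neg_smul]

theorem sfin_sfin_apply (β α : V) : sfin (sfin β α) = sfin β * sfin α * sfin β := by
  ext x
  have hx : ⟪x, sfin β α⟫ = ⟪sfin β x, α⟫ := by rw [← inner_sfin_sfin β, sfin_sfin]
  simp only [AffineEquiv.coe_mul, Function.comp_apply]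
  rw [sfin_apply (sfin β α), sfin_apply α, sfin_sub, sfin_smul, sfin_sfin, hx, inner_sfin_sfin]

end Reflections

namespace RootSystemIn

variable {V : Type*} [NormedAddCommGroup V] [InnerProductSpace ℝ V] (R : RootSystemIn V)
  {α β : V}

theorem sfin_mem (hα : α ∈ R.roots) (hβ : β ∈ R.roots) : sfin α β ∈ R.roots := by
  rw [sfin_apply]
  exact R.reflect_mem α hα β hβ

theorem neg_mem (hα : α ∈ R.roots) : -α ∈ R.roots := by
  simpa only [sfin_self] using R.sfin_mem hα hα

theorem inner_sq_lt_of_inner_pos (hα : α ∈ R.roots) (hβ : β ∈ R.roots) (hαβ : 0 < ⟪α, β⟫)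
    (hne : α ≠ β) : ⟪α, β⟫ ^ 2 < ⟪α, α⟫ * ⟪β, β⟫ := by
  have hα₀ : ‖α‖ ≠ 0 := norm_ne_zero_iff.mpr (R.ne_zero α hα)
  have hlt : ⟪α, β⟫ < ‖α‖ * ‖β‖ := by
    refine inner_lt_norm_mul_iff_real.mpr fun h => hne ?_
    have hβα : β = (‖β‖ / ‖α‖) • α := by rw [div_eq_inv_mul, mul_smul, h, inv_smul_smul₀ hα₀]
    rcases R.reduced α hα _ (hβα ▸ hβ) with h1 | h1
    · rw [hβα, h1, one_smul]
    · have : ⟪α, β⟫ = -⟪α, α⟫ := by rw [hβα, h1, neg_one_smul, inner_neg_right]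
      have := real_inner_self_nonneg (x := α)
      linarith
  rw [real_inner_self_eq_norm_sq, real_inner_self_eq_norm_sq, ← mul_pow]
  exact pow_lt_pow_left₀ hlt hαβ.le two_ne_zero

theorem sub_mem_of_inner_pos (hα : α ∈ R.roots) (hβ : β ∈ R.roots) (hαβ : 0 < ⟪α, β⟫)
    (hne : α ≠ β) : α - β ∈ R.roots := by
  have hβα := R.reflect_mem β hβ α hα
  have hαβ' := R.reflect_mem α hα β hβ
  obtain ⟨k, hk⟩ := R.crystal β hβ α hα
  obtain ⟨k', hk'⟩ := R.crystal α hα β hβ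
  rw [hk] at hβα
  rw [hk'] at hαβ'
  rw [real_inner_comm] at hk'
  have hαα := real_inner_self_pos.mpr (R.ne_zero α hα)
  have hββ := real_inner_self_pos.mpr (R.ne_zero β hβ)
  -- the Cartan integers `k, k'` are positive with `k * k' < 4`, so one of them is `1`
  have hk_pos : 0 < k := by exact_mod_cast hk ▸ (by positivity : 0 < 2 * ⟪α, β⟫ / ⟪β, β⟫)
  have hk'_pos : 0 < k' := by exact_mod_cast hk' ▸ (by positivity : 0 < 2 * ⟪α, β⟫ / ⟪α, α⟫)
  have hkk' : k * k' < 4 := by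
    have : (k : ℝ) * k' < 4 := by
      rw [← hk, ← hk', div_mul_div_comm, div_lt_iff₀ (by positivity)]
      nlinarith [R.inner_sq_lt_of_inner_pos hα hβ hαβ hne]
    exact_mod_cast this
  obtain rfl | rfl : k = 1 ∨ k' = 1 := by
    by_contra! h
    have : 2 ≤ k := by omega
    have : 2 ≤ k' := by omega
    nlinarith
  · rwa [Int.cast_one, one_smul] at hβα
  · simpa using R.neg_mem hαβ'

end RootSystemIn

section PositiveSystem

variable {V : Type*} [NormedAddCommGroup V] [InnerProductSpace ℝ V] {R : RootSystemIn V}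
  {f : V →ₗ[ℝ] ℝ} {α β : V}

abbrev positiveRoots (R : RootSystemIn V) (f : V →ₗ[ℝ] ℝ) : Set V :=
  {α | α ∈ R.roots ∧ 0 < f α}

theorem positiveRoots_induction {motive : (α : V) → α ∈ positiveRoots R f → Prop}
    (h : ∀ α (hα : α ∈ positiveRoots R f),
      (∀ γ (hγ : γ ∈ positiveRoots R f), f γ < f α → motive γ hγ) → motive α hα)
    (α : V) (hα : α ∈ positiveRoots R f) : motive α hα := by
  have hwf : (positiveRoots R f).WellFoundedOn (Function.onFun (· < ·) f) :=
    Set.wellFoundedOn_image.mp ((R.finite.subset fun _ h => h.1).image f).wellFoundedOn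
  exact hwf.induction (P := fun α => ∀ hα, motive α hα) hα
    (fun α hα ih _ => h α hα fun γ hγ hlt => ih γ hγ hlt hγ) hα

theorem neg_mem_positiveRoots (hf : ∀ α ∈ R.roots, f α ≠ 0) (hα : α ∈ R.roots)
    (hαf : α ∉ positiveRoots R f) : -α ∈ positiveRoots R f := by
  refine ⟨R.neg_mem hα, ?_⟩
  have := hf α hα
  simp only [Set.mem_ofPred_eq, hα, true_and, not_lt] at hαf
  rw [map_neg]
  exact neg_pos.mpr (lt_of_le_of_ne hαf this)

theorem mem_closure_baseOf (hα : α ∈ positiveRoots R f) :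
    α ∈ AddSubmonoid.closure (baseOf (positiveRoots R f)) := by
  induction α, hα using positiveRoots_induction with
  | h α hα ih =>
  by_cases hbase : α ∈ baseOf (positiveRoots R f)
  · exact AddSubmonoid.subset_closure hbase
  obtain ⟨γ, hγ, δ, hδ, rfl⟩ : ∃ γ ∈ positiveRoots R f, ∃ δ ∈ positiveRoots R f, α = γ + δ := by
    by_contra h
    exact hbase ⟨hα, h⟩
  have hfγ := hγ.2
  have hfδ := hδ.2
  rw [map_add] at ih
  exact add_mem (ih γ hγ (by linarith)) (ih δ hδ (by linarith))

theorem exists_mem_baseOf_inner_pos (hα : α ∈ positiveRoots R f) :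
    ∃ β ∈ baseOf (positiveRoots R f), 0 < ⟪α, β⟫ := by
  by_contra! h
  have hle : ∀ x ∈ AddSubmonoid.closure (baseOf (positiveRoots R f)), ⟪α, x⟫ ≤ 0 := by
    intro x hx
    induction hx using AddSubmonoid.closure_induction with
    | mem x hx => exact h x hx
    | zero => simp
    | add x y _ _ hx hy => rw [inner_add_right]; linarith
  have := real_inner_self_pos.mpr (R.ne_zero α hα.1)
  linarith [hle α (mem_closure_baseOf hα)]

theorem apply_sfin_lt_of_inner_pos (hβ : β ∈ positiveRoots R f) (hαβ : 0 < ⟪α, β⟫) :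
    f (sfin β α) < f α := by
  have : 0 < 2 * ⟪α, β⟫ / ⟪β, β⟫ := by
    have := real_inner_self_pos.mpr (R.ne_zero β hβ.1)
    positivity
  rw [sfin_apply, map_sub, map_smul, smul_eq_mul, sub_lt_self_iff]
  exact mul_pos this hβ.2

theorem sfin_mem_positiveRoots (hf : ∀ α ∈ R.roots, f α ≠ 0)
    (hβ : β ∈ baseOf (positiveRoots R f)) (hα : α ∈ positiveRoots R f) (hne : α ≠ β) :
    sfin β α ∈ positiveRoots R f := by
  induction α, hα using positiveRoots_induction with
  | h α hα ih =>
  have hβr := hβ.1.1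
  by_contra hneg
  have hαβ : 0 < ⟪α, β⟫ := by
    by_contra! hαβ
    refine hneg ⟨R.sfin_mem hβr hα.1, ?_⟩
    have := real_inner_self_pos.mpr (R.ne_zero β hβr)
    have : 2 * ⟪α, β⟫ / ⟪β, β⟫ ≤ 0 := div_nonpos_of_nonpos_of_nonneg (by linarith) this.le
    rw [sfin_apply, map_sub, map_smul, smul_eq_mul]
    nlinarith [hα.2, hβ.1.2]
  have hsub : α - β ∈ positiveRoots R f := by
    by_contra h
    have := neg_mem_positiveRoots hf (R.sub_mem_of_inner_pos hα.1 hβr hαβ hne) h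
    exact hβ.2 ⟨α, hα, -(α - β), this, by abel⟩
  have hsub_ne : α - β ≠ β := by
    intro h
    have h2β : (2 : ℝ) • β ∈ R.roots := by
      rw [two_smul, ← sub_eq_iff_eq_add.mp h]
      exact hα.1
    rcases R.reduced β hβr 2 h2β with h2 | h2 <;> norm_num at h2
  -- `s_β (α - β) = s_β α + β` is positive while `s_β α` is negative, decomposing `β`
  have := ih (α - β) hsub (by rw [map_sub]; linarith [hβ.1.2]) hsub_ne
  rw [sfin_sub, sfin_self, sub_neg_eq_add] at this
  exact hβ.2 ⟨_, this, _, neg_mem_positiveRoots hf (R.sfin_mem hβr hα.1) hneg, by abel⟩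

theorem sfin_mem_closure_baseOf (hf : ∀ α ∈ R.roots, f α ≠ 0) (hα : α ∈ positiveRoots R f) :
    sfin α ∈ Subgroup.closure (sfin '' baseOf (positiveRoots R f)) := by
  induction α, hα using positiveRoots_induction with
  | h α hα ih =>
  by_cases hbase : α ∈ baseOf (positiveRoots R f)
  · exact Subgroup.subset_closure ⟨α, hbase, rfl⟩
  obtain ⟨β, hβ, hαβ⟩ := exists_mem_baseOf_inner_pos hα
  have hne : α ≠ β := fun h => hbase (h ▸ hβ)
  have hγ := sfin_mem_positiveRoots hf hβ hα hne
  have hsβ : sfin β ∈ Subgroup.closure (sfin '' baseOf (positiveRoots R f)) :=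
    Subgroup.subset_closure ⟨β, hβ, rfl⟩
  have key : sfin α = sfin β * sfin (sfin β α) * sfin β := by
    rw [sfin_sfin_apply, ← mul_assoc, ← mul_assoc, sfin_mul_self, one_mul, mul_assoc,
      sfin_mul_self, mul_one]
  rw [key]
  exact mul_mem (mul_mem hsβ (ih _ hγ (apply_sfin_lt_of_inner_pos hβ.1 hαβ))) hsβ

theorem Wfin_le_closure_baseOf (hf : ∀ α ∈ R.roots, f α ≠ 0) :
    Wfin R ≤ Subgroup.closure (sfin '' baseOf (positiveRoots R f)) := by
  refine (Subgroup.closure_le _).mpr ?_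
  rintro _ ⟨α, hα, rfl⟩
  by_cases hpos : α ∈ positiveRoots R f
  · exact sfin_mem_closure_baseOf hf hpos
  · rw [← sfin_neg]
    exact sfin_mem_closure_baseOf hf (neg_mem_positiveRoots hf hα hpos)

end PositiveSystem

theorem Subgroup.mem_closure_preimage_subtype {G : Type*} [Group G] {H : Subgroup G} {S : Set G}
    (hS : S ⊆ H) {x : H} (hx : (x : G) ∈ Subgroup.closure S) :
    x ∈ Subgroup.closure (H.subtype ⁻¹' S) := by
  rw [← Set.image_preimage_eq_of_subset (s := S) (f := H.subtype) (by simpa using hS),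
    ← MonoidHom.map_closure] at hx
  obtain ⟨y, hy, hyx⟩ := hx
  rwa [← Subtype.ext hyx]

theorem IsAffineCoxeterStructure.mem_range_simple {V : Type*} [NormedAddCommGroup V]
    [InnerProductSpace ℝ V] {R : RootSystemIn V} {Pos : Set V} {αh : V} {B : Type*}
    {M : CoxeterMatrix B} {cs : CoxeterSystem M (Waff R)}
    (hcs : IsAffineCoxeterStructure R cs Pos αh)
    {g : ↥(Waff R)} {α : V} (hα : α ∈ baseOf Pos) (hg : (g : V ≃ᵃ[ℝ] V) = sfin α) :
    g ∈ Set.range cs.simple := by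
  obtain ⟨i, rfl⟩ : g ∈ {g | ∃ i, g = cs.simple i} := hcs.1 ▸ Or.inl ⟨α, hα, hg⟩
  exact ⟨i, rfl⟩

theorem reflections_conj_Wfin_general
    {V : Type*} [NormedAddCommGroup V] [InnerProductSpace ℝ V]
    (R : RootSystemIn V) (Pos : Set V) (hPos : IsPositiveSystem R Pos)
    (αh : V)
    {B : Type*} {M : CoxeterMatrix B} (cs : CoxeterSystem M (Waff R))
    (hcs : IsAffineCoxeterStructure R cs Pos αh)
    (x w : ↥(Waff R)) (hw : (w : V ≃ᵃ[ℝ] V) ∈ Wfin R) :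
    {t : ↥(Waff R) | cs.IsReflection t ∧ cs.bruhatLT (t * (w * x)) (w * x) ∧
        (t : V ≃ᵃ[ℝ] V) ∉ Wfin R} =
      (fun t => w * t * w⁻¹) ''
        {t : ↥(Waff R) | cs.IsReflection t ∧ cs.bruhatLT (t * x) x ∧
          (t : V ≃ᵃ[ℝ] V) ∉ Wfin R} := by
  obtain ⟨f, hf, rfl⟩ := hPos
  have hbase_Waff : sfin '' baseOf (positiveRoots R f) ⊆ Waff R := by
    rintro _ ⟨α, hα, rfl⟩
    exact Subgroup.subset_closure (Or.inl ⟨α, hα.1.1, rfl⟩)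
  have hbase_simple : (Waff R).subtype ⁻¹' (sfin '' baseOf (positiveRoots R f)) ⊆
      Set.range cs.simple ∩ (Wfin R).comap (Waff R).subtype := by
    rintro g ⟨α, hα, hg⟩
    refine ⟨hcs.mem_range_simple hα hg.symm, ?_⟩
    change (Waff R).subtype g ∈ Wfin R
    rw [← hg]
    exact Subgroup.subset_closure ⟨α, hα.1.1, rfl⟩
  have hw_closure : w ∈ Subgroup.closure (Set.range cs.simple ∩ (Wfin R).comap (Waff R).subtype) :=
    Subgroup.closure_mono hbase_simple
      (Subgroup.mem_closure_preimage_subtype hbase_Waff (Wfin_le_closure_baseOf hf hw))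
  simp only [← and_assoc, cs.isReflection_and_bruhatLT_iff]
  exact cs.leftInversions_mul_of_mem_closure hw_closure x

/-- For `x ∈ W_aff` and `w ∈ W_fin`, the set of reflections `t ∈ R_L(wx)` with `t ∉ W_fin`
equals `w (R_L(x) \ R(W_fin)) w⁻¹`. -/
theorem reflections_conj_Wfin
    {V : Type*} [NormedAddCommGroup V] [InnerProductSpace ℝ V] [FiniteDimensional ℝ V]
    (R : RootSystemIn V) (Pos : Set V) (hPos : IsPositiveSystem R Pos)
    (αh : V) (hαh : IsHighestShortRoot R Pos αh)
    {B : Type*} {M : CoxeterMatrix B} (cs : CoxeterSystem M (Waff R))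
    (hcs : IsAffineCoxeterStructure R cs Pos αh)
    (p : ℕ) [Fact p.Prime]
    (hph : 2 * ⟪rhoOf Pos, αh⟫ / ⟪αh, αh⟫ + 1 ≤ (p : ℝ))
    (x w : ↥(Waff R)) (hw : (w : V ≃ᵃ[ℝ] V) ∈ Wfin R) :
    {t : ↥(Waff R) | cs.IsReflection t ∧ cs.bruhatLT (t * (w * x)) (w * x) ∧
        (t : V ≃ᵃ[ℝ] V) ∉ Wfin R} =
      (fun t => w * t * w⁻¹) ''
        {t : ↥(Waff R) | cs.IsReflection t ∧ cs.bruhatLT (t * x) x ∧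
          (t : V ≃ᵃ[ℝ] V) ∉ Wfin R} :=
  reflections_conj_Wfin_general R Pos hPos αh cs hcs x w hw
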